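/- Let L ∈ (0,1) and consider intervals (a, b(a)) of Gaussian measure L with b(a) = √2·erf⁻¹(2L + erf((√2/2)a)). The Gaussian perimeter P(a) = (2π)^{-1/2}(e^{-a²/2} + e^{-b(a)²/2}) attains its maximum over all finite a exactly at a = −√2·erf⁻¹(L), i.e., at the interval symmetric about the origin. -/

import Mathlib

open Real

/-- The error function `erf(x) = (2/√π)∫₀ˣ e^{-t²} dt`. -/
noncomputable def erf (x : ℝ) : ℝ :=
  2 / Real.sqrt Real.pi * ∫ t in (0:ℝ)..x, Real.exp (-t ^ 2)

/-!
With `g t = e^{-t²/2}` one has `g' = -t g`, so for every centre `c`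
`g x = g c - c ∫_c^x g - ∫_c^x (t - c) g t dt`, and the last integral is positive unless `x = c`.
Apply this at `c = a₀` to `x = a` and at `c = -a₀` to `x = b`: the measure constraint says
that both endpoints move by the same Gaussian mass, so the two linear terms cancel because the
centres are opposite, and what remains is a strict loss of perimeter unless `a = a₀`.
-/

open intervalIntegral

section PositiveWeight

variable {f : ℝ → ℝ}

theorem integral_eq_zero_iff_of_continuous_of_pos (hf : Continuous f) (hpos : ∀ t, 0 < f t)
    {c x : ℝ} :
    ∫ t in c..x, f t = 0 ↔ x = c := by
  refine ⟨fun h => ?_, fun h => h ▸ integral_same⟩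
  by_contra hne
  rcases lt_or_gt_of_ne hne with hlt | hlt
  · exact (intervalIntegral_pos_of_pos (hf.intervalIntegrable x c) hpos hlt).ne'
      (by rw [integral_symm, h, neg_zero])
  · exact (intervalIntegral_pos_of_pos (hf.intervalIntegrable c x) hpos hlt).ne' h

theorem integral_sub_mul_pos_of_continuous_of_pos (hf : Continuous f) (hpos : ∀ t, 0 < f t)
    {c x : ℝ} (hx : x ≠ c) :
    0 < ∫ t in c..x, (t - c) * f t := by
  have hint (u v : ℝ) : IntervalIntegrable (fun t => (t - c) * f t) MeasureTheory.volume u v :=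
    ((continuous_id.sub continuous_const).mul hf).intervalIntegrable u v
  rcases lt_or_gt_of_ne hx with hlt | hlt
  · rw [integral_symm, neg_pos, ← neg_pos, ← integral_neg]
    refine intervalIntegral_pos_of_pos_on (hint x c).neg (fun t ht => ?_) hlt
    exact neg_pos.2 (mul_neg_of_neg_of_pos (sub_neg.2 ht.2) (hpos t))
  · exact intervalIntegral_pos_of_pos_on (hint c x)
      (fun t ht => mul_pos (sub_pos.2 ht.1) (hpos t)) hlt

theorem integral_sub_mul_nonneg_of_continuous_of_pos (hf : Continuous f)
    (hpos : ∀ t, 0 < f t) (c x : ℝ) :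
    0 ≤ ∫ t in c..x, (t - c) * f t := by
  rcases eq_or_ne x c with rfl | hx
  · rw [integral_same]
  · exact (integral_sub_mul_pos_of_continuous_of_pos hf hpos hx).le

end PositiveWeight

noncomputable def gaussian (t : ℝ) : ℝ := exp (-t ^ 2 / 2)

theorem gaussian_pos (t : ℝ) : 0 < gaussian t := exp_pos _

theorem continuous_gaussian : Continuous gaussian := by
  unfold gaussian
  fun_prop

theorem hasDerivAt_gaussian (x : ℝ) : HasDerivAt gaussian (-x * gaussian x) x := by
  have h := (((hasDerivAt_pow 2 x).neg).div_const 2).exp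
  convert h using 1
  · rfl
  · simp only [gaussian, Pi.neg_apply, Nat.cast_ofNat]
    ring

theorem integral_mul_gaussian (x y : ℝ) :
    ∫ t in x..y, t * gaussian t = gaussian x - gaussian y := by
  have hderiv (t : ℝ) : HasDerivAt (fun u => -gaussian u) (t * gaussian t) t :=
    (hasDerivAt_gaussian t).neg.congr_deriv (by ring)
  rw [integral_eq_sub_of_hasDerivAt (fun t _ => hderiv t)
    ((continuous_id.mul continuous_gaussian).intervalIntegrable x y)]
  ring

theorem gaussian_eq_sub_integral (c x : ℝ) :
    gaussian x = gaussian c - c * (∫ t in c..x, gaussian t) -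
      ∫ t in c..x, (t - c) * gaussian t := by
  have hsplit : ∫ t in c..x, (t - c) * gaussian t =
      (∫ t in c..x, t * gaussian t) - c * ∫ t in c..x, gaussian t := by
    rw [← integral_const_mul, ← integral_sub (f := fun t => t * gaussian t)
      (g := fun t => c * gaussian t)
      ((continuous_id.mul continuous_gaussian).intervalIntegrable c x)
      ((continuous_const.mul continuous_gaussian).intervalIntegrable c x)]
    exact integral_congr fun t _ => by ring
  rw [hsplit, integral_mul_gaussian]
  ring

theorem gaussian_add_lt_of_integral_eq {a b c : ℝ}
    (hmass : ∫ t in c..a, gaussian t = ∫ t in -c..b, gaussian t) (ha : a ≠ c) :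
    gaussian a + gaussian b < gaussian c + gaussian (-c) := by
  have hloss_a := integral_sub_mul_pos_of_continuous_of_pos continuous_gaussian gaussian_pos ha
  have hloss_b := integral_sub_mul_nonneg_of_continuous_of_pos continuous_gaussian gaussian_pos
    (-c) b
  rw [gaussian_eq_sub_integral c a, gaussian_eq_sub_integral (-c) b, hmass]
  linarith

theorem integral_gaussian_neg (x : ℝ) :
    ∫ t in 0..-x, gaussian t = -∫ t in 0..x, gaussian t := by
  have heven : ∫ t in 0..x, gaussian (-t) = ∫ t in 0..x, gaussian t := by
    simp only [gaussian, neg_sq]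
  rw [← heven, integral_comp_neg, neg_zero, integral_symm]

theorem erf_div_sqrt_two (x : ℝ) :
    erf (x / √2) = √(2 / π) * ∫ t in 0..x, gaussian t := by
  have hs2 : (√2 : ℝ) ≠ 0 := by positivity
  have hsub : ∫ t in 0..x, gaussian t = √2 * ∫ s in 0..x / √2, exp (-s ^ 2) := by
    have h := integral_comp_div (a := 0) (b := x) (fun s => exp (-s ^ 2)) hs2
    rw [zero_div, smul_eq_mul] at h
    rw [← h]
    refine integral_congr fun t _ => ?_
    rw [gaussian, div_pow, sq_sqrt zero_le_two, neg_div]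
  rw [erf, hsub, sqrt_div' _ pi_pos.le, ← mul_assoc]
  congr 1
  field_simp
  rw [sq_sqrt zero_le_two]

theorem integral_gaussian_eq_of_erf_sub_eq {L a₀ a b : ℝ} (ha₀ : erf (a₀ / √2) = -L)
    (hab : erf (b / √2) - erf (a / √2) = 2 * L) :
    ∫ t in a₀..a, gaussian t = ∫ t in -a₀..b, gaussian t := by
  simp only [erf_div_sqrt_two] at ha₀ hab
  have hprim : (∫ t in 0..b, gaussian t) - ∫ t in 0..a, gaussian t =
      -2 * ∫ t in 0..a₀, gaussian t :=
    mul_left_cancel₀ (a := √(2 / π)) (by positivity) (by linear_combination hab + 2 * ha₀)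
  have hint (u v : ℝ) := continuous_gaussian.intervalIntegrable (μ := MeasureTheory.volume) u v
  rw [← integral_interval_sub_left (hint 0 a) (hint 0 a₀),
    ← integral_interval_sub_left (hint 0 b) (hint 0 (-a₀)), integral_gaussian_neg]
  linarith

theorem gaussian_perimeter_max (L a₀ : ℝ)
    (ha₀ : erf (a₀ / Real.sqrt 2) = -L) :
    ∀ a b : ℝ, a < b → erf (b / Real.sqrt 2) - erf (a / Real.sqrt 2) = 2 * L →
      ((2 * Real.pi) ^ (-(1:ℝ)/2) * (Real.exp (-a ^ 2 / 2) + Real.exp (-b ^ 2 / 2)) ≤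
          (2 * Real.pi) ^ (-(1:ℝ)/2) *
            (Real.exp (-a₀ ^ 2 / 2) + Real.exp (-(-a₀) ^ 2 / 2)) ∧
        ((2 * Real.pi) ^ (-(1:ℝ)/2) * (Real.exp (-a ^ 2 / 2) + Real.exp (-b ^ 2 / 2)) =
            (2 * Real.pi) ^ (-(1:ℝ)/2) *
              (Real.exp (-a₀ ^ 2 / 2) + Real.exp (-(-a₀) ^ 2 / 2)) ↔
          a = a₀)) := by
  intro a b _ hab
  have hmass := integral_gaussian_eq_of_erf_sub_eq ha₀ hab
  have hscale : (0 : ℝ) < (2 * π) ^ (-(1:ℝ)/2) := by positivity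
  change _ * (gaussian a + gaussian b) ≤ _ * (gaussian a₀ + gaussian (-a₀)) ∧
    (_ * (gaussian a + gaussian b) = _ * (gaussian a₀ + gaussian (-a₀)) ↔ a = a₀)
  rcases eq_or_ne a a₀ with rfl | ha
  · obtain rfl : b = -a :=
      (integral_eq_zero_iff_of_continuous_of_pos continuous_gaussian gaussian_pos).mp
        (by rw [← hmass, integral_same])
    simp
  · have hlt := mul_lt_mul_of_pos_left (gaussian_add_lt_of_integral_eq hmass ha) hscale
    exact ⟨hlt.le, iff_of_false hlt.ne ha⟩
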